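/- arXiv:2204.00586 — 2 statements merged into one kernel-verified Lean document; each statement's English description precedes it below -/
import Mathlib

section
/- Let ψ : ℝ → ℝ be differentiable at 0 with ψ(0) = 0 and define b : ℝ → ℝ by b(y) = ψ(y)/y for y ≠ 0 and b(0) = ψ′(0); assume b(y) ≥ 0 for all y. Let a_1,…,a_n ≥ 0, φ_1,…,φ_n ∈ ℝ, and suppose w ∈ ℝ satisfies ∑_{ℓ=1}^n a_ℓ ψ(φ_ℓ − w) = 0 with S := ∑_{ℓ=1}^n a_ℓ b(φ_ℓ − w) > 0. Define ā_ℓ = a_ℓ b(φ_ℓ − w)/S. Then each ā_ℓ ∈ [0,1], ∑_{ℓ=1}^n ā_ℓ = 1, w = ∑_{ℓ=1}^n ā_ℓ φ_ℓ, and in particular min_ℓ φ_ℓ ≤ w ≤ max_ℓ φ_ℓ. -/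
/-! Since `ψ y = b y * y`, the estimating equation says `∑ ℓ, c ℓ * (φ ℓ - w) = 0` for the
nonnegative weights `c ℓ = a ℓ * b (φ ℓ - w)`, i.e. `w` is the `c`-weighted mean of the `φ ℓ`;
normalising `c` by its positive total gives convex coefficients. -/

open Finset

section WeightedMean

variable {ι : Type*} [Fintype ι]

theorem div_sum_mem_Icc {c : ι → ℝ} (hc : ∀ i, 0 ≤ c i) (hS : 0 < ∑ j, c j) (i : ι) :
    c i / ∑ j, c j ∈ Set.Icc (0 : ℝ) 1 :=
  ⟨div_nonneg (hc i) hS.le,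
    (div_le_one hS).2 (single_le_sum (fun j _ => hc j) (mem_univ i))⟩

theorem sum_div_sum_eq_one {c : ι → ℝ} (hS : ∑ j, c j ≠ 0) :
    ∑ i, c i / ∑ j, c j = 1 := by
  rw [← sum_div, div_self hS]

theorem eq_sum_div_mul_of_sum_mul_sub_eq_zero {c φ : ι → ℝ} {w : ℝ} (hS : ∑ j, c j ≠ 0)
    (h : ∑ i, c i * (φ i - w) = 0) :
    w = ∑ i, c i / (∑ j, c j) * φ i := by
  have hsum : ∑ i, c i * φ i = (∑ j, c j) * w := by
    simpa [mul_sub, sum_sub_distrib, ← sum_mul, sub_eq_zero] using h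
  simp_rw [div_mul_eq_mul_div, ← sum_div, hsum, mul_div_cancel_left₀ w hS]

theorem ciInf_le_sum_mul {p : ι → ℝ} (hp : ∀ i, 0 ≤ p i) (h1 : ∑ i, p i = 1) (φ : ι → ℝ) :
    ⨅ i, φ i ≤ ∑ i, p i * φ i :=
  calc ⨅ i, φ i = ∑ i, p i * ⨅ j, φ j := by rw [← sum_mul, h1, one_mul]
    _ ≤ ∑ i, p i * φ i := sum_le_sum fun i _ =>
        mul_le_mul_of_nonneg_left (ciInf_le (Set.finite_range φ).bddBelow i) (hp i)

theorem sum_mul_le_ciSup {p : ι → ℝ} (hp : ∀ i, 0 ≤ p i) (h1 : ∑ i, p i = 1) (φ : ι → ℝ) :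
    ∑ i, p i * φ i ≤ ⨆ i, φ i :=
  calc ∑ i, p i * φ i ≤ ∑ i, p i * ⨆ j, φ j := sum_le_sum fun i _ =>
        mul_le_mul_of_nonneg_left (le_ciSup (Set.finite_range φ).bddAbove i) (hp i)
    _ = ⨆ i, φ i := by rw [← sum_mul, h1, one_mul]

end WeightedMean

theorem apply_eq_mul_self_of_eq_div {ψ b : ℝ → ℝ} (hψ0 : ψ 0 = 0)
    (hb : ∀ y : ℝ, y ≠ 0 → b y = ψ y / y) (y : ℝ) : ψ y = b y * y := by
  rcases eq_or_ne y 0 with rfl | hy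
  · simp [hψ0]
  · rw [hb y hy, div_mul_cancel₀ _ hy]

theorem m_estimate_convex_combination_general
    (ψ : ℝ → ℝ) (hψ0 : ψ 0 = 0)
    (b : ℝ → ℝ) (hb : ∀ y : ℝ, y ≠ 0 → b y = ψ y / y)
    (hbnn : ∀ y, 0 ≤ b y)
    (n : ℕ) (a φ : Fin n → ℝ) (ha : ∀ ℓ, 0 ≤ a ℓ) (w : ℝ)
    (heq : ∑ ℓ, a ℓ * ψ (φ ℓ - w) = 0)
    (hS : 0 < ∑ ℓ, a ℓ * b (φ ℓ - w)) :
    (∀ ℓ, a ℓ * b (φ ℓ - w) / (∑ j, a j * b (φ j - w)) ∈ Set.Icc (0 : ℝ) 1) ∧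
    (∑ ℓ, a ℓ * b (φ ℓ - w) / (∑ j, a j * b (φ j - w)) = 1) ∧
    (w = ∑ ℓ, (a ℓ * b (φ ℓ - w) / (∑ j, a j * b (φ j - w))) * φ ℓ) ∧
    ((⨅ ℓ, φ ℓ) ≤ w ∧ w ≤ ⨆ ℓ, φ ℓ) := by
  have hc : ∀ ℓ, 0 ≤ a ℓ * b (φ ℓ - w) := fun ℓ => mul_nonneg (ha ℓ) (hbnn _)
  have hmean : ∑ ℓ, a ℓ * b (φ ℓ - w) * (φ ℓ - w) = 0 := by
    simpa [apply_eq_mul_self_of_eq_div hψ0 hb, mul_assoc] using heq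
  have hmem := div_sum_mem_Icc hc hS
  have hsum := sum_div_sum_eq_one hS.ne'
  have hw := eq_sum_div_mul_of_sum_mul_sub_eq_zero hS.ne' hmean
  refine ⟨hmem, hsum, hw, ?_, ?_⟩
  · exact hw ▸ ciInf_le_sum_mul (fun ℓ => (hmem ℓ).1) hsum φ
  · exact hw ▸ sum_mul_le_ciSup (fun ℓ => (hmem ℓ).1) hsum φ

/-- Robust aggregation as a convex combination. Under nonnegative
modulation weights `b`, nonnegative combination weights `a`, the estimating equation
`∑ ℓ, a ℓ * ψ (φ ℓ - w) = 0`, and `S = ∑ ℓ, a ℓ * b (φ ℓ - w) > 0`, the effective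
weights `ā ℓ = a ℓ * b (φ ℓ - w) / S` lie in `[0,1]`, sum to one, represent `w` as
`∑ ℓ, ā ℓ * φ ℓ`, and in particular `min φ ≤ w ≤ max φ`. -/
theorem m_estimate_convex_combination
    (ψ : ℝ → ℝ) (hψ0 : ψ 0 = 0) (dψ : ℝ) (hdψ : HasDerivAt ψ dψ 0)
    (b : ℝ → ℝ) (hb : ∀ y : ℝ, y ≠ 0 → b y = ψ y / y) (hb0 : b 0 = dψ)
    (hbnn : ∀ y, 0 ≤ b y)
    (n : ℕ) (a φ : Fin n → ℝ) (ha : ∀ ℓ, 0 ≤ a ℓ) (w : ℝ)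
    (heq : ∑ ℓ, a ℓ * ψ (φ ℓ - w) = 0)
    (hS : 0 < ∑ ℓ, a ℓ * b (φ ℓ - w)) :
    (∀ ℓ, a ℓ * b (φ ℓ - w) / (∑ j, a j * b (φ j - w)) ∈ Set.Icc (0 : ℝ) 1) ∧
    (∑ ℓ, a ℓ * b (φ ℓ - w) / (∑ j, a j * b (φ j - w)) = 1) ∧
    (w = ∑ ℓ, (a ℓ * b (φ ℓ - w) / (∑ j, a j * b (φ j - w))) * φ ℓ) ∧
    ((⨅ ℓ, φ ℓ) ≤ w ∧ w ≤ ⨆ ℓ, φ ℓ) :=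
  m_estimate_convex_combination_general ψ hψ0 b hb hbnn n a φ ha w heq hS
end

section
/- Let J : ℝ^M → ℝ be ν-strongly convex with δ-Lipschitz gradient and minimizer w⁰, with ν, δ > 0. On a probability space with filtration (F_i), let (w_i)_{i≥0} be an adapted sequence satisfying w_i = w_{i−1} − μ(∇J(w_{i−1}) + s_i) with E[s_i | F_{i−1}] = 0 and E[‖s_i‖² | F_{i−1}] ≤ β²‖w⁰ − w_{i−1}‖² + σ² almost surely, where E‖w⁰ − w_0‖² < ∞. If 0 < μ < 2ν/(δ² + β²), then limsup_{i→∞} E‖w⁰ − w_i‖² ≤ μσ²/(2ν − μ(δ² + β²)); in particular there exist constants C > 0 and μ₀ > 0 such that limsup_{i→∞} E‖w⁰ − w_i‖² ≤ Cμ for all 0 < μ ≤ μ₀. -/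
/-!
Since `w⁰` minimises `J`, `g w⁰ = 0`, so the error after one step splits as
`w⁰ - w_{i+1} = u_i + μ s_{i+1}` with `u_i = (w⁰ - w_i) - μ (g w⁰ - g w_i)` measurable for `F_i`.
Strong monotonicity and the Lipschitz bound give `‖u_i‖² ≤ (1 - 2μν + μ²δ²) ‖w⁰ - w_i‖²`, and the
cross term `⟪u_i, s_{i+1}⟫` has mean zero because the noise has zero conditional mean. With the
conditional variance bound this yields
`E‖w⁰ - w_{i+1}‖² ≤ (1 - 2μν + μ²(δ² + β²)) E‖w⁰ - w_i‖² + μ²σ²`,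
a contraction exactly when `μ (δ² + β²) < 2ν`, and iterating it bounds the limsup by
`μ²σ² / (1 - (1 - 2μν + μ²(δ² + β²)))`.
-/

open MeasureTheory Filter

/-- The stochastic-gradient process of the paper: `w` is adapted, evolves via
`w_{i+1} = w_i - μ (g(w_i) + s_{i+1})`, the gradient noise `s` is integrable with
integrable squared norm, has zero conditional mean, conditional second moment bounded
by `β² ‖w⁰ - w_i‖² + σ²`, and the initial mean-square deviation is finite. -/
def IsSGDProcess {Mdim : ℕ} {Ω : Type*} [MeasurableSpace Ω] (μpr : Measure Ω)
    (F : Filtration ℕ ‹MeasurableSpace Ω›)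
    (g : EuclideanSpace ℝ (Fin Mdim) → EuclideanSpace ℝ (Fin Mdim))
    (w0 : EuclideanSpace ℝ (Fin Mdim)) (β σ μstep : ℝ)
    (w s : ℕ → Ω → EuclideanSpace ℝ (Fin Mdim)) : Prop :=
  Adapted F w ∧ (∀ i, StronglyMeasurable (s i)) ∧
  (∀ i ω, w (i + 1) ω = w i ω - μstep • (g (w i ω) + s (i + 1) ω)) ∧
  (∀ i, Integrable (s (i + 1)) μpr) ∧
  (∀ i, Integrable (fun ω => ‖s (i + 1) ω‖ ^ 2) μpr) ∧
  (∀ i, μpr[s (i + 1) | F i] =ᵐ[μpr] 0) ∧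
  (∀ i, ∀ᵐ ω ∂μpr,
    (μpr[fun ω' => ‖s (i + 1) ω'‖ ^ 2 | F i]) ω ≤ β ^ 2 * ‖w0 - w i ω‖ ^ 2 + σ ^ 2) ∧
  Integrable (fun ω => ‖w0 - w 0 ω‖ ^ 2) μpr

open scoped RealInnerProductSpace Topology

lemma limsup_le_of_le_mul_add {a : ℕ → ℝ} {A c : ℝ} (hA0 : 0 ≤ A) (hA1 : A < 1) (hc : 0 ≤ c)
    (ha : ∀ i, 0 ≤ a i) (hrec : ∀ i, a (i + 1) ≤ A * a i + c) :
    limsup a atTop ≤ c / (1 - A) := by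
  have h1A : 0 < 1 - A := by linarith
  have hbound : ∀ i, a i ≤ A ^ i * a 0 + c / (1 - A) := by
    intro i
    induction i with
    | zero => simpa using div_nonneg hc h1A.le
    | succ n ih =>
      calc a (n + 1) ≤ A * (A ^ n * a 0 + c / (1 - A)) + c :=
            (hrec n).trans (by gcongr)
        _ = A ^ (n + 1) * a 0 + c / (1 - A) := by field_simp; ring
  have htend : Tendsto (fun i => A ^ i * a 0 + c / (1 - A)) atTop (𝓝 (c / (1 - A))) := by
    simpa using ((tendsto_pow_atTop_nhds_zero_of_lt_one hA0 hA1).mul_const (a 0)).add_const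
      (c / (1 - A))
  calc limsup a atTop ≤ limsup (fun i => A ^ i * a 0 + c / (1 - A)) atTop :=
        limsup_le_limsup (.of_forall hbound) (isCoboundedUnder_le_of_le atTop ha)
          htend.isBoundedUnder_le
    _ = c / (1 - A) := htend.limsup_eq

section InnerProductSpace

variable {E : Type*} [NormedAddCommGroup E] [InnerProductSpace ℝ E]

lemma norm_sub_smul_sq_le {d e : E} {μ ν δ : ℝ} (hμ : 0 ≤ μ) (hstrong : ν * ‖d‖ ^ 2 ≤ ⟪d, e⟫)
    (hlip : ‖e‖ ≤ δ * ‖d‖) :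
    ‖d - μ • e‖ ^ 2 ≤ (1 - 2 * μ * ν + μ ^ 2 * δ ^ 2) * ‖d‖ ^ 2 := by
  have he : ‖e‖ ^ 2 ≤ δ ^ 2 * ‖d‖ ^ 2 := by
    rw [← mul_pow]; exact pow_le_pow_left₀ (norm_nonneg e) hlip 2
  rw [norm_sub_sq_real, real_inner_smul_right, norm_smul, mul_pow, Real.norm_eq_abs, sq_abs]
  nlinarith [mul_le_mul_of_nonneg_left hstrong hμ, mul_le_mul_of_nonneg_left he (sq_nonneg μ)]

lemma contraction_factor_nonneg {d e : E} {μ ν δ : ℝ} (hd : d ≠ 0) (hμ : 0 ≤ μ)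
    (hstrong : ν * ‖d‖ ^ 2 ≤ ⟪d, e⟫) (hlip : ‖e‖ ≤ δ * ‖d‖) :
    0 ≤ 1 - 2 * μ * ν + μ ^ 2 * δ ^ 2 :=
  nonneg_of_mul_nonneg_left ((sq_nonneg _).trans (norm_sub_smul_sq_le hμ hstrong hlip))
    (by positivity)

lemma IsLocalMin.hasGradientAt_eq_zero [CompleteSpace E] {J : E → ℝ} {x g : E}
    (hmin : IsLocalMin J x) (hJ : HasGradientAt J g x) : g = 0 := by
  simpa using hmin.hasFDerivAt_eq_zero hJ.hasFDerivAt

variable {Ω : Type*} {m m0 : MeasurableSpace Ω} {P : Measure Ω}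

lemma MeasureTheory.MemLp.integrable_inner {f h : Ω → E} (hf : MemLp f 2 P) (hh : MemLp h 2 P) :
    Integrable (fun ω => ⟪f ω, h ω⟫) P :=
  (L2.integrable_inner (hf.toLp f) (hh.toLp h)).congr <| by
    filter_upwards [hf.coeFn_toLp, hh.coeFn_toLp] with ω hfω hhω
    rw [hfω, hhω]

lemma integral_le_of_condExp_le (hm : m ≤ m0) [SigmaFinite (P.trim hm)] {f h : Ω → ℝ}
    (hh : Integrable h P) (hfh : P[f|m] ≤ᵐ[P] h) : ∫ ω, f ω ∂P ≤ ∫ ω, h ω ∂P := by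
  rw [← integral_condExp hm]
  exact integral_mono_ae integrable_condExp hh hfh

variable [CompleteSpace E]

lemma integral_inner_eq_zero_of_condExp_eq_zero (hm : m ≤ m0) [SigmaFinite (P.trim hm)]
    {u s : Ω → E} (hu : StronglyMeasurable[m] u) (hus : Integrable (fun ω => ⟪u ω, s ω⟫) P)
    (hs : Integrable s P) (hs0 : P[s|m] =ᵐ[P] 0) : ∫ ω, ⟪u ω, s ω⟫ ∂P = 0 := by
  have hpull : P[fun ω => ⟪u ω, s ω⟫|m] =ᵐ[P] 0 := by
    have h : P[fun ω => ⟪u ω, s ω⟫|m] =ᵐ[P] fun ω => ⟪u ω, (P[s|m]) ω⟫ :=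
      condExp_bilin_of_stronglyMeasurable_left (innerSL ℝ) hu hus hs
    filter_upwards [h, hs0] with ω hω hω0
    simp [hω, hω0]
  rw [← integral_condExp hm, integral_congr_ae hpull]
  simp

lemma integral_norm_add_smul_sq (hm : m ≤ m0) [IsFiniteMeasure P] {u s : Ω → E}
    (hu : StronglyMeasurable[m] u) (hu2 : MemLp u 2 P) (hs2 : MemLp s 2 P)
    (hs0 : P[s|m] =ᵐ[P] 0) (c : ℝ) :
    ∫ ω, ‖u ω + c • s ω‖ ^ 2 ∂P = ∫ ω, ‖u ω‖ ^ 2 ∂P + c ^ 2 * ∫ ω, ‖s ω‖ ^ 2 ∂P := by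
  have hexpand : ∀ ω, ‖u ω + c • s ω‖ ^ 2
      = ‖u ω‖ ^ 2 + 2 * c * ⟪u ω, s ω⟫ + c ^ 2 * ‖s ω‖ ^ 2 := fun ω => by
    rw [norm_add_sq_real, real_inner_smul_right, norm_smul, mul_pow, Real.norm_eq_abs, sq_abs]
    ring
  have hus := hu2.integrable_inner hs2
  have hcross := integral_inner_eq_zero_of_condExp_eq_zero hm hu hus
    (hs2.integrable one_le_two) hs0
  have hu2' : Integrable (fun ω => ‖u ω‖ ^ 2) P := hu2.integrable_norm_pow two_ne_zero
  have hs2' : Integrable (fun ω => ‖s ω‖ ^ 2) P := hs2.integrable_norm_pow two_ne_zero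
  have hsum : Integrable (fun ω => ‖u ω‖ ^ 2 + 2 * c * ⟪u ω, s ω⟫) P :=
    hu2'.add (hus.const_mul _)
  simp_rw [hexpand]
  rw [integral_add hsum (hs2'.const_mul _), integral_add hu2' (hus.const_mul _),
    integral_const_mul, integral_const_mul, hcross]
  ring

end InnerProductSpace

namespace IsSGDProcess

variable {M : ℕ} {Ω : Type*} [MeasurableSpace Ω] {P : Measure Ω}
  {F : Filtration ℕ ‹MeasurableSpace Ω›} {g : EuclideanSpace ℝ (Fin M) → EuclideanSpace ℝ (Fin M)}
  {w0 : EuclideanSpace ℝ (Fin M)} {β σ μ ν δ : ℝ} {w s : ℕ → Ω → EuclideanSpace ℝ (Fin M)}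

lemma sub_succ_eq (hp : IsSGDProcess P F g w0 β σ μ w s) (hg0 : g w0 = 0) (i : ℕ) (ω : Ω) :
    w0 - w (i + 1) ω = w0 - w i ω - μ • (g w0 - g (w i ω)) + μ • s (i + 1) ω := by
  obtain ⟨-, -, hrec, -⟩ := hp
  rw [hrec i ω, hg0, zero_sub, smul_neg, smul_add]
  abel

lemma stronglyMeasurable_grad_sub (hp : IsSGDProcess P F g w0 β σ μ w s)
    (hlip : ∀ x y, ‖g x - g y‖ ≤ δ * ‖x - y‖) (i : ℕ) :
    StronglyMeasurable[F i] fun ω => g w0 - g (w i ω) :=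
  have hg : Continuous g := (LipschitzWith.of_dist_le' (K := δ) fun x y => by
    simpa only [dist_eq_norm] using hlip x y).continuous
  stronglyMeasurable_const.sub (hg.comp_stronglyMeasurable (hp.1 i).stronglyMeasurable)

lemma stronglyMeasurable_drift (hp : IsSGDProcess P F g w0 β σ μ w s)
    (hlip : ∀ x y, ‖g x - g y‖ ≤ δ * ‖x - y‖) (i : ℕ) :
    StronglyMeasurable[F i] fun ω => w0 - w i ω - μ • (g w0 - g (w i ω)) :=
  (stronglyMeasurable_const.sub (hp.1 i).stronglyMeasurable).sub
    ((hp.stronglyMeasurable_grad_sub hlip i).const_smul μ)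

lemma memLp_drift (hp : IsSGDProcess P F g w0 β σ μ w s)
    (hlip : ∀ x y, ‖g x - g y‖ ≤ δ * ‖x - y‖) {i : ℕ} (hi : MemLp (fun ω => w0 - w i ω) 2 P) :
    MemLp (fun ω => w0 - w i ω - μ • (g w0 - g (w i ω))) 2 P :=
  hi.sub ((hi.of_le_mul ((hp.stronglyMeasurable_grad_sub hlip i).mono (F.le i)).aestronglyMeasurable
    (ae_of_all _ fun ω => hlip w0 (w i ω))).const_smul μ)

lemma memLp_noise (hp : IsSGDProcess P F g w0 β σ μ w s) (i : ℕ) :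
    MemLp (s (i + 1)) 2 P := by
  obtain ⟨-, hsm, -, -, hs2, -⟩ := hp
  exact (memLp_two_iff_integrable_sq_norm (hsm _).aestronglyMeasurable).mpr (hs2 i)

lemma memLp_sub (hp : IsSGDProcess P F g w0 β σ μ w s) (hg0 : g w0 = 0)
    (hlip : ∀ x y, ‖g x - g y‖ ≤ δ * ‖x - y‖) : ∀ i, MemLp (fun ω => w0 - w i ω) 2 P
  | 0 => by
    obtain ⟨hadapt, -, -, -, -, -, -, hinit⟩ := hp
    exact (memLp_two_iff_integrable_sq_norm (stronglyMeasurable_const.sub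
      ((hadapt 0).stronglyMeasurable.mono (F.le 0))).aestronglyMeasurable).mpr hinit
  | i + 1 => by
    simp_rw [hp.sub_succ_eq hg0 i]
    exact (hp.memLp_drift hlip (memLp_sub hp hg0 hlip i)).add ((hp.memLp_noise i).const_smul μ)

variable [IsProbabilityMeasure P]

lemma integral_norm_noise_sq_le (hp : IsSGDProcess P F g w0 β σ μ w s) (hg0 : g w0 = 0)
    (hlip : ∀ x y, ‖g x - g y‖ ≤ δ * ‖x - y‖) (i : ℕ) :
    ∫ ω, ‖s (i + 1) ω‖ ^ 2 ∂P ≤ β ^ 2 * ∫ ω, ‖w0 - w i ω‖ ^ 2 ∂P + σ ^ 2 := by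
  have hi := (hp.memLp_sub hg0 hlip i).integrable_norm_pow two_ne_zero
  have hbound : Integrable (fun ω => β ^ 2 * ‖w0 - w i ω‖ ^ 2 + σ ^ 2) P :=
    (hi.const_mul _).add (integrable_const _)
  obtain ⟨-, -, -, -, -, -, hcond, -⟩ := hp
  have := integral_le_of_condExp_le (F.le i) hbound (hcond i)
  rwa [integral_add (hi.const_mul _) (integrable_const _), integral_const_mul, integral_const,
    probReal_univ, one_smul] at this

lemma msd_succ_le (hp : IsSGDProcess P F g w0 β σ μ w s) (hg0 : g w0 = 0) (hμ : 0 ≤ μ)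
    (hstrong : ∀ x y, ν * ‖x - y‖ ^ 2 ≤ ⟪x - y, g x - g y⟫)
    (hlip : ∀ x y, ‖g x - g y‖ ≤ δ * ‖x - y‖) (i : ℕ) :
    ∫ ω, ‖w0 - w (i + 1) ω‖ ^ 2 ∂P ≤
      (1 - 2 * μ * ν + μ ^ 2 * (δ ^ 2 + β ^ 2)) * ∫ ω, ‖w0 - w i ω‖ ^ 2 ∂P + μ ^ 2 * σ ^ 2 := by
  have hi := hp.memLp_sub hg0 hlip i
  have hdrift : ∫ ω, ‖w0 - w i ω - μ • (g w0 - g (w i ω))‖ ^ 2 ∂P ≤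
      (1 - 2 * μ * ν + μ ^ 2 * δ ^ 2) * ∫ ω, ‖w0 - w i ω‖ ^ 2 ∂P := by
    rw [← integral_const_mul]
    exact integral_mono ((hp.memLp_drift hlip hi).integrable_norm_pow two_ne_zero)
      ((hi.integrable_norm_pow two_ne_zero).const_mul _)
      fun ω => norm_sub_smul_sq_le hμ (hstrong _ _) (hlip _ _)
  have hs0 : P[s (i + 1)|F i] =ᵐ[P] 0 := hp.2.2.2.2.2.1 i
  simp_rw [hp.sub_succ_eq hg0 i]
  rw [integral_norm_add_smul_sq (F.le i) (hp.stronglyMeasurable_drift hlip i)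
    (hp.memLp_drift hlip hi) (hp.memLp_noise i) hs0]
  nlinarith [mul_le_mul_of_nonneg_left (hp.integral_norm_noise_sq_le hg0 hlip i) (sq_nonneg μ)]

-- On the zero space the contraction factor may be negative, but then the deviation vanishes.
lemma limsup_msd_le (hp : IsSGDProcess P F g w0 β σ μ w s) (hg0 : g w0 = 0) (hμ : 0 < μ)
    (hμν : μ * (δ ^ 2 + β ^ 2) < 2 * ν)
    (hstrong : ∀ x y, ν * ‖x - y‖ ^ 2 ≤ ⟪x - y, g x - g y⟫)
    (hlip : ∀ x y, ‖g x - g y‖ ≤ δ * ‖x - y‖) :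
    limsup (fun i => ∫ ω, ‖w0 - w i ω‖ ^ 2 ∂P) atTop ≤
      μ * σ ^ 2 / (2 * ν - μ * (δ ^ 2 + β ^ 2)) := by
  have hgap : 0 < 2 * ν - μ * (δ ^ 2 + β ^ 2) := by linarith
  rcases subsingleton_or_nontrivial (EuclideanSpace ℝ (Fin M)) with hE | hE
  · have hzero : ∀ i ω, ‖w0 - w i ω‖ = 0 := fun i ω => by
      rw [Subsingleton.elim (w0 - w i ω) 0, norm_zero]
    simp only [hzero, ne_eq, OfNat.ofNat_ne_zero, not_false_eq_true, zero_pow, integral_zero,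
      limsup_const]
    positivity
  obtain ⟨x, hx⟩ := exists_ne (0 : EuclideanSpace ℝ (Fin M))
  have hA0 : 0 ≤ 1 - 2 * μ * ν + μ ^ 2 * (δ ^ 2 + β ^ 2) := by
    have := contraction_factor_nonneg (sub_ne_zero.mpr hx) hμ.le (hstrong x 0) (hlip x 0)
    nlinarith [sq_nonneg (μ * β)]
  have hrate : 1 - (1 - 2 * μ * ν + μ ^ 2 * (δ ^ 2 + β ^ 2)) =
      μ * (2 * ν - μ * (δ ^ 2 + β ^ 2)) := by ring
  calc limsup (fun i => ∫ ω, ‖w0 - w i ω‖ ^ 2 ∂P) atTop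
      ≤ μ ^ 2 * σ ^ 2 / (1 - (1 - 2 * μ * ν + μ ^ 2 * (δ ^ 2 + β ^ 2))) :=
        limsup_le_of_le_mul_add hA0 (by nlinarith [mul_pos hμ hgap]) (by positivity)
          (fun i => integral_nonneg fun ω => sq_nonneg _) (hp.msd_succ_le hg0 hμ.le hstrong hlip)
    _ = μ * σ ^ 2 / (2 * ν - μ * (δ ^ 2 + β ^ 2)) := by
      rw [hrate]
      field_simp

end IsSGDProcess

open scoped RealInnerProductSpace in
theorem sgd_steady_state_msd_general
    {Mdim : ℕ} {Ω : Type*} [MeasurableSpace Ω]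
    (μpr : Measure Ω) [IsProbabilityMeasure μpr]
    (F : Filtration ℕ ‹MeasurableSpace Ω›)
    (J : EuclideanSpace ℝ (Fin Mdim) → ℝ)
    (g : EuclideanSpace ℝ (Fin Mdim) → EuclideanSpace ℝ (Fin Mdim))
    (hgrad : ∀ x, HasGradientAt J (g x) x)
    (ν δ : ℝ)
    (hstrong : ∀ x y, ν * ‖x - y‖ ^ 2 ≤ ⟪x - y, g x - g y⟫)
    (hlip : ∀ x y, ‖g x - g y‖ ≤ δ * ‖x - y‖)
    (w0 : EuclideanSpace ℝ (Fin Mdim)) (hmin : ∀ w, J w0 ≤ J w)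
    (β σ : ℝ) (μstep : ℝ) (hμ0 : 0 < μstep) (hμ1 : μstep < 2 * ν / (δ ^ 2 + β ^ 2))
    (w s : ℕ → Ω → EuclideanSpace ℝ (Fin Mdim))
    (hproc : IsSGDProcess μpr F g w0 β σ μstep w s) :
    limsup (fun i => ∫ ω, ‖w0 - w i ω‖ ^ 2 ∂μpr) atTop ≤
        μstep * σ ^ 2 / (2 * ν - μstep * (δ ^ 2 + β ^ 2)) ∧
    ∃ C > (0 : ℝ), ∃ μ₀ > (0 : ℝ), ∀ μ' : ℝ, 0 < μ' → μ' ≤ μ₀ →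
      ∀ w' s' : ℕ → Ω → EuclideanSpace ℝ (Fin Mdim),
        IsSGDProcess μpr F g w0 β σ μ' w' s' →
        limsup (fun i => ∫ ω, ‖w0 - w' i ω‖ ^ 2 ∂μpr) atTop ≤ C * μ' := by
  have hlocal : IsLocalMin J w0 := Eventually.of_forall hmin
  have hg0 : g w0 = 0 := hlocal.hasGradientAt_eq_zero (hgrad w0)
  obtain ⟨hν, hD⟩ : 0 < ν ∧ 0 < δ ^ 2 + β ^ 2 := by
    rcases div_pos_iff.mp (hμ0.trans hμ1) with ⟨h2ν, hD⟩ | ⟨-, hD⟩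
    · exact ⟨by linarith, hD⟩
    · exact absurd hD (not_lt.mpr (by positivity))
  refine ⟨hproc.limsup_msd_le hg0 hμ0 ((lt_div_iff₀ hD).mp hμ1) hstrong hlip,
    σ ^ 2 / ν + 1, by positivity, ν / (δ ^ 2 + β ^ 2), by positivity,
    fun μ' hμ' hμ'₀ w' s' hp => ?_⟩
  have hμ'D : μ' * (δ ^ 2 + β ^ 2) ≤ ν := (le_div_iff₀ hD).mp hμ'₀
  calc limsup (fun i => ∫ ω, ‖w0 - w' i ω‖ ^ 2 ∂μpr) atTop
      ≤ μ' * σ ^ 2 / (2 * ν - μ' * (δ ^ 2 + β ^ 2)) :=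
        hp.limsup_msd_le hg0 hμ' (by linarith) hstrong hlip
    _ ≤ σ ^ 2 / ν * μ' := by
      rw [div_mul_eq_mul_div, mul_comm (σ ^ 2)]
      gcongr
      linarith
    _ ≤ (σ ^ 2 / ν + 1) * μ' := by gcongr; linarith

open scoped RealInnerProductSpace in
/-- Steady-state mean-square-deviation bound for constant step-size
stochastic gradient descent: if `0 < μ < 2ν/(δ² + β²)` then
`limsup_i E‖w⁰ - w_i‖² ≤ μσ²/(2ν - μ(δ² + β²))`; in particular there are constants
`C > 0` and `μ₀ > 0` such that `limsup_i E‖w⁰ - w_i‖² ≤ Cμ` for every step-size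
`0 < μ ≤ μ₀` (and every process run with that step-size). -/
theorem sgd_steady_state_msd
    {Mdim : ℕ} {Ω : Type*} [MeasurableSpace Ω]
    (μpr : Measure Ω) [IsProbabilityMeasure μpr]
    (F : Filtration ℕ ‹MeasurableSpace Ω›)
    (J : EuclideanSpace ℝ (Fin Mdim) → ℝ)
    (g : EuclideanSpace ℝ (Fin Mdim) → EuclideanSpace ℝ (Fin Mdim))
    (hgrad : ∀ x, HasGradientAt J (g x) x)
    (ν δ : ℝ) (hν : 0 < ν) (hδ : 0 < δ)
    (hstrong : ∀ x y, ν * ‖x - y‖ ^ 2 ≤ ⟪x - y, g x - g y⟫)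
    (hlip : ∀ x y, ‖g x - g y‖ ≤ δ * ‖x - y‖)
    (w0 : EuclideanSpace ℝ (Fin Mdim)) (hmin : ∀ w, J w0 ≤ J w)
    (β σ : ℝ) (μstep : ℝ) (hμ0 : 0 < μstep) (hμ1 : μstep < 2 * ν / (δ ^ 2 + β ^ 2))
    (w s : ℕ → Ω → EuclideanSpace ℝ (Fin Mdim))
    (hproc : IsSGDProcess μpr F g w0 β σ μstep w s) :
    limsup (fun i => ∫ ω, ‖w0 - w i ω‖ ^ 2 ∂μpr) atTop ≤
        μstep * σ ^ 2 / (2 * ν - μstep * (δ ^ 2 + β ^ 2)) ∧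
    ∃ C > (0 : ℝ), ∃ μ₀ > (0 : ℝ), ∀ μ' : ℝ, 0 < μ' → μ' ≤ μ₀ →
      ∀ w' s' : ℕ → Ω → EuclideanSpace ℝ (Fin Mdim),
        IsSGDProcess μpr F g w0 β σ μ' w' s' →
        limsup (fun i => ∫ ω, ‖w0 - w' i ω‖ ^ 2 ∂μpr) atTop ≤ C * μ' :=
  sgd_steady_state_msd_general μpr F J g hgrad ν δ hstrong hlip w0 hmin β σ μstep hμ0 hμ1 w s hproc
end
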